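/- The diversity gain achieved by the HSIC-PA scheme equals M: Pout(P) > 0 for every P > 0, and lim_{P→∞} log Pout(P) / log P = −M. -/

import Mathlib

/-!
Write `εs = 2 ^ Rs - 1` and `c = (2 ^ R0 - 1) * 2 ^ Rs`. When the primary gain satisfies
`G ≥ c / P`, the interference threshold `τ(G)` is at least `εs`, and then user `m` is in outage
exactly when `P * H_m < εs`. When `0 ≤ G < c / P`, the HSIC-PA rate is still at least the rate
obtained by treating the primary signal as noise, so outage forces `P * H_m < εs * (c + 1)`.
`G` and the `H_m` are independent exponentials, so these two regimes squeeze `Pout(P)` between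
`e^{-c} (εs e^{-εs})^M / P^M` and `(εs^M + c (εs (c + 1))^M) / P^M`. Hence the exponent is `-M`.
-/

open MeasureTheory ProbabilityTheory Real Filter

/-- The interference threshold `τ(g) = max{0, g/α₀ − 1}`. -/
noncomputable def tau (α0 g : ℝ) : ℝ := max 0 (g / α0 - 1)

/-- The HSIC-PA achievable rate of a secondary user with channel gain `h`,
given the primary channel gain `g`. -/
noncomputable def rateHSIC (P0 Ps α0 h g : ℝ) : ℝ :=
  if Ps * h ≤ tau α0 g then Real.logb 2 (1 + Ps * h)
  else max (Real.logb 2 (1 + Ps * h / (P0 * g + 1))) (Real.logb 2 (1 + tau α0 g))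

/-- The HSIC-PA overall outage probability with equal powers `P0 = Ps = P`, realized on
the canonical probability space carrying `M + 1` i.i.d. rate-one exponential random
variables: coordinate `0` is the primary channel gain `G = |g|²` and coordinates
`1, …, M` are the secondary channel gains `H₁, …, H_M`. -/
noncomputable def outageHSIC (M : ℕ) (R0 Rs P : ℝ) : ℝ :=
  haveI : IsProbabilityMeasure (expMeasure 1) := isProbabilityMeasure_expMeasure one_pos
  ((Measure.pi fun _ : Fin (M + 1) => expMeasure 1)
    {ω | (⨆ m : Fin M, rateHSIC P P ((2 ^ R0 - 1) / P) (ω m.succ) (ω 0)) < Rs}).toReal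

open Set Topology

/-- The positivity of `a` covers the empty index type, over which `⨆` is `0`. -/
lemma iSup_lt_iff_of_pos {ι : Type*} [Finite ι] {f : ι → ℝ} {a : ℝ} (ha : 0 < a) :
    (⨆ i, f i) < a ↔ ∀ i, f i < a := by
  cases isEmpty_or_nonempty ι
  · simp [ha]
  · obtain ⟨i, hi⟩ := Finite.exists_max f
    exact ⟨fun h j => (le_ciSup (Finite.bddAbove_range f) j).trans_lt h,
      fun h => (ciSup_le hi).trans_lt (h i)⟩

lemma logb_two_one_add_lt_iff {x R : ℝ} (hx : -1 < x) : logb 2 (1 + x) < R ↔ x < 2 ^ R - 1 := by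
  rw [logb_lt_iff_lt_rpow one_lt_two (by linarith)]
  constructor <;> intro h <;> linarith

lemma le_logb_two_one_add {x R : ℝ} (hx : 2 ^ R - 1 ≤ x) : R ≤ logb 2 (1 + x) := by
  have h2R : (0 : ℝ) < 2 ^ R := by positivity
  exact not_lt.1 fun h => ((logb_two_one_add_lt_iff (by linarith)).1 h).not_ge hx

lemma one_lt_two_rpow {R : ℝ} (hR : 0 < R) : 1 < (2 : ℝ) ^ R :=
  one_lt_rpow one_lt_two hR

lemma mul_exp_neg_le_one_sub_exp_neg (t : ℝ) : t * exp (-t) ≤ 1 - exp (-t) := by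
  have h := mul_le_mul_of_nonneg_right (add_one_le_exp t) (exp_pos (-t)).le
  rw [← exp_add, add_neg_cancel, exp_zero] at h
  linarith

theorem tendsto_log_div_log_of_le_of_le {f : ℝ → ℝ} {A B d : ℝ} (hA : 0 < A)
    (hlow : ∀ᶠ x in atTop, A / x ^ d ≤ f x) (hup : ∀ᶠ x in atTop, f x ≤ B / x ^ d) :
    Tendsto (fun x => log (f x) / log x) atTop (𝓝 (-d)) := by
  have hlim (C : ℝ) : Tendsto (fun x => log C / log x - d) atTop (𝓝 (-d)) := by
    simpa using (tendsto_log_atTop.const_div_atTop (log C)).sub_const d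
  have hlog (C : ℝ) (hC : 0 < C) {x : ℝ} (hx : 1 < x) :
      log (C / x ^ d) / log x = log C / log x - d := by
    have hlogx := (log_pos hx).ne'
    rw [log_div hC.ne' (rpow_pos_of_pos (by linarith) d).ne', log_rpow (by linarith)]
    field_simp
  obtain ⟨x, hxA, hxB, hx⟩ := (hlow.and (hup.and (eventually_gt_atTop 0))).exists
  have hB : 0 < B := by
    have := hxA.trans hxB
    rw [div_le_div_iff_of_pos_right (rpow_pos_of_pos hx d)] at this
    linarith
  refine tendsto_of_tendsto_of_tendsto_of_le_of_le' (hlim A) (hlim B) ?_ ?_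
  · filter_upwards [hlow, eventually_gt_atTop 1] with x hfx hx
    rw [← hlog A hA hx]
    exact div_le_div_of_nonneg_right
      (log_le_log (div_pos hA (rpow_pos_of_pos (by linarith) d)) hfx) (log_nonneg hx.le)
  · filter_upwards [hlow, hup, eventually_gt_atTop 1] with x hfx hfx' hx
    rw [← hlog B hB hx]
    exact div_le_div_of_nonneg_right
      (log_le_log ((div_pos hA (rpow_pos_of_pos (by linarith) d)).trans_le hfx) hfx')
      (log_nonneg hx.le)

section ExponentialDistribution

variable {r : ℝ}

lemma expMeasure_singleton (r x : ℝ) : expMeasure r {x} = 0 :=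
  withDensity_absolutelyContinuous _ _ (measure_singleton x)

lemma expMeasure_real_Iic (hr : 0 < r) {x : ℝ} (hx : 0 ≤ x) :
    (expMeasure r).real (Iic x) = 1 - exp (-(r * x)) := by
  have := isProbabilityMeasure_expMeasure hr
  rw [← cdf_eq_real, cdf_expMeasure_eq hr, if_pos hx]

lemma expMeasure_real_Iic_le (hr : 0 < r) {x : ℝ} (hx : 0 ≤ x) :
    (expMeasure r).real (Iic x) ≤ r * x := by
  rw [expMeasure_real_Iic hr hx]
  linarith [add_one_le_exp (-(r * x))]

lemma expMeasure_real_Ioi (hr : 0 < r) {x : ℝ} (hx : 0 ≤ x) :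
    (expMeasure r).real (Ioi x) = exp (-(r * x)) := by
  have := isProbabilityMeasure_expMeasure hr
  rw [← compl_Iic, probReal_compl_eq_one_sub measurableSet_Iic, expMeasure_real_Iic hr hx]
  ring

lemma expMeasure_real_Ioo (hr : 0 < r) {x : ℝ} (hx : 0 ≤ x) :
    (expMeasure r).real (Ioo 0 x) = 1 - exp (-(r * x)) := by
  have := isProbabilityMeasure_expMeasure hr
  rw [measureReal_congr (Ioo_ae_eq_Ioc' (expMeasure_singleton r x)), measureReal_def,
    ← measure_cdf (expMeasure r), StieltjesFunction.measure_Ioc, cdf_expMeasure_eq hr,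
    cdf_expMeasure_eq hr, if_pos hx, if_pos le_rfl, mul_zero, neg_zero, exp_zero, sub_self,
    sub_zero, ENNReal.toReal_ofReal]
  simpa using mul_nonneg hr.le hx

end ExponentialDistribution

lemma measureReal_pi_fin_cons {α : Type*} [MeasurableSpace α] (μ : Measure α) [SigmaFinite μ]
    (M : ℕ) (A B : Set α) :
    (Measure.pi fun _ : Fin (M + 1) => μ).real {ω | ω 0 ∈ A ∧ ∀ m : Fin M, ω m.succ ∈ B} =
      μ.real A * μ.real B ^ M := by
  have hbox : {ω : Fin (M + 1) → α | ω 0 ∈ A ∧ ∀ m : Fin M, ω m.succ ∈ B} =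
      univ.pi (Fin.cons A fun _ => B) := by
    ext ω
    simp [Fin.forall_fin_succ]
  simp [measureReal_def, hbox, Measure.pi_pi, Fin.prod_univ_succ]

lemma le_tau {α0 g x : ℝ} (hα0 : 0 < α0) (hg : α0 * (1 + x) ≤ g) : x ≤ tau α0 g := by
  have : 1 + x ≤ g / α0 := by rw [le_div_iff₀ hα0]; linarith
  exact le_max_of_le_right (by linarith)

section Rate

variable {P0 Ps α0 h g Rs : ℝ}

lemma rateHSIC_lt_of_le_tau (hτ : 2 ^ Rs - 1 ≤ tau α0 g) (hh0 : 0 ≤ Ps * h)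
    (hh : Ps * h < 2 ^ Rs - 1) : rateHSIC P0 Ps α0 h g < Rs := by
  rw [rateHSIC, if_pos (hh.le.trans hτ)]
  exact (logb_two_one_add_lt_iff (by linarith)).2 hh

lemma mul_lt_of_rateHSIC_lt_of_le_tau (hτ : 2 ^ Rs - 1 ≤ tau α0 g)
    (hr : rateHSIC P0 Ps α0 h g < Rs) : Ps * h < 2 ^ Rs - 1 := by
  by_contra! hh
  rw [rateHSIC] at hr
  split_ifs at hr
  · exact hr.not_ge (le_logb_two_one_add hh)
  · exact hr.not_ge ((le_logb_two_one_add hτ).trans (le_max_right _ _))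

lemma mul_lt_of_rateHSIC_lt (hRs : 0 ≤ Rs) (hg : 0 ≤ P0 * g)
    (hr : rateHSIC P0 Ps α0 h g < Rs) : Ps * h < (2 ^ Rs - 1) * (P0 * g + 1) := by
  have hε : 0 ≤ (2 : ℝ) ^ Rs - 1 := by linarith [one_le_rpow one_le_two hRs]
  rw [rateHSIC] at hr
  split_ifs at hr with hτ
  · rcases le_or_gt (Ps * h) (-1) with hh | hh
    · nlinarith
    · nlinarith [(logb_two_one_add_lt_iff hh).1 hr]
  · have hτ0 : 0 ≤ tau α0 g := le_max_left _ _
    have hq : 0 < Ps * h / (P0 * g + 1) := div_pos (by linarith) (by linarith)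
    have := (logb_two_one_add_lt_iff (by linarith)).1 ((le_max_left _ _).trans_lt hr)
    rwa [div_lt_iff₀ (by linarith)] at this

end Rate

section Outage

variable {M : ℕ} {R0 Rs P : ℝ}

lemma outageHSIC_eq (hRs : 0 < Rs) :
    outageHSIC M R0 Rs P = (Measure.pi fun _ : Fin (M + 1) => expMeasure 1).real
      {ω | ∀ m : Fin M, rateHSIC P P ((2 ^ R0 - 1) / P) (ω m.succ) (ω 0) < Rs} := by
  simp only [outageHSIC, iSup_lt_iff_of_pos hRs, measureReal_def]

lemma two_rpow_sub_one_le_tau {g : ℝ} (hR0 : 0 < R0) (hP : 0 < P)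
    (hg : (2 ^ R0 - 1) * 2 ^ Rs / P ≤ g) : 2 ^ Rs - 1 ≤ tau ((2 ^ R0 - 1) / P) g :=
  le_tau (div_pos (by linarith [one_lt_two_rpow hR0]) hP)
    (by rw [mul_div_right_comm] at hg; linarith)

lemma outageHSIC_ge (hR0 : 0 < R0) (hRs : 0 < Rs) (hP : 0 < P) :
    exp (-((2 ^ R0 - 1) * 2 ^ Rs / P)) * (1 - exp (-((2 ^ Rs - 1) / P))) ^ M ≤
      outageHSIC M R0 Rs P := by
  have hεs : 0 ≤ (2 ^ Rs - 1) / P := div_nonneg (by linarith [one_lt_two_rpow hRs]) hP.le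
  have hc : 0 ≤ (2 ^ R0 - 1) * 2 ^ Rs / P :=
    div_nonneg (mul_nonneg (by linarith [one_lt_two_rpow hR0]) (by positivity)) hP.le
  have hbox : {ω : Fin (M + 1) → ℝ | ω 0 ∈ Ioi ((2 ^ R0 - 1) * 2 ^ Rs / P) ∧
      ∀ m : Fin M, ω m.succ ∈ Ioo 0 ((2 ^ Rs - 1) / P)} ⊆
      {ω | ∀ m : Fin M, rateHSIC P P ((2 ^ R0 - 1) / P) (ω m.succ) (ω 0) < Rs} :=
    fun ω ⟨hg, hh⟩ m => rateHSIC_lt_of_le_tau (two_rpow_sub_one_le_tau hR0 hP (le_of_lt hg))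
      (mul_nonneg hP.le (hh m).1.le) ((lt_div_iff₀' hP).1 (hh m).2)
  have := isProbabilityMeasure_expMeasure (r := 1) one_pos
  calc _ = (Measure.pi fun _ : Fin (M + 1) => expMeasure 1).real
          {ω | ω 0 ∈ Ioi ((2 ^ R0 - 1) * 2 ^ Rs / P) ∧
            ∀ m : Fin M, ω m.succ ∈ Ioo 0 ((2 ^ Rs - 1) / P)} := by
        rw [measureReal_pi_fin_cons, expMeasure_real_Ioi one_pos hc,
          expMeasure_real_Ioo one_pos hεs, one_mul, one_mul]
    _ ≤ _ := measureReal_mono hbox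
    _ = _ := (outageHSIC_eq hRs).symm

lemma outageHSIC_pos (hR0 : 0 < R0) (hRs : 0 < Rs) (hP : 0 < P) : 0 < outageHSIC M R0 Rs P := by
  refine lt_of_lt_of_le ?_ (outageHSIC_ge hR0 hRs hP)
  have : exp (-((2 ^ Rs - 1) / P)) < 1 :=
    exp_lt_one_iff.2 (neg_lt_zero.2 (div_pos (by linarith [one_lt_two_rpow hRs]) hP))
  exact mul_pos (exp_pos _) (pow_pos (by linarith) M)

lemma outageHSIC_ge_div_pow (hR0 : 0 < R0) (hRs : 0 < Rs) (hP : 1 ≤ P) :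
    exp (-((2 ^ R0 - 1) * 2 ^ Rs)) * ((2 ^ Rs - 1) * exp (-(2 ^ Rs - 1))) ^ M / P ^ M ≤
      outageHSIC M R0 Rs P := by
  have hεs : 0 ≤ (2 : ℝ) ^ Rs - 1 := by linarith [one_lt_two_rpow hRs]
  have hc : 0 ≤ (2 ^ R0 - 1) * (2 : ℝ) ^ Rs :=
    mul_nonneg (by linarith [one_lt_two_rpow hR0]) (by positivity)
  refine le_trans ?_ (outageHSIC_ge hR0 hRs (by linarith))
  rw [mul_div_assoc, ← div_pow]
  gcongr ?_ * ?_ ^ M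
  · exact exp_le_exp.2 (neg_le_neg (div_le_self hc hP))
  · calc (2 ^ Rs - 1) * exp (-(2 ^ Rs - 1)) / P
        = (2 ^ Rs - 1) / P * exp (-(2 ^ Rs - 1)) := by ring
      _ ≤ (2 ^ Rs - 1) / P * exp (-((2 ^ Rs - 1) / P)) := by
        gcongr; exact div_le_self hεs hP
      _ ≤ 1 - exp (-((2 ^ Rs - 1) / P)) := mul_exp_neg_le_one_sub_exp_neg _

lemma setOf_rateHSIC_lt_subset (hR0 : 0 < R0) (hRs : 0 < Rs) (hP : 0 < P) :
    {ω : Fin (M + 1) → ℝ | ∀ m : Fin M,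
        rateHSIC P P ((2 ^ R0 - 1) / P) (ω m.succ) (ω 0) < Rs} ⊆
      {ω | ω 0 ∈ Ici ((2 ^ R0 - 1) * 2 ^ Rs / P) ∧
        ∀ m : Fin M, ω m.succ ∈ Iic ((2 ^ Rs - 1) / P)} ∪
      {ω | ω 0 ∈ Iic ((2 ^ R0 - 1) * 2 ^ Rs / P) ∧
        ∀ m : Fin M, ω m.succ ∈ Iic ((2 ^ Rs - 1) * ((2 ^ R0 - 1) * 2 ^ Rs + 1) / P)} ∪
      {ω | ω 0 ∈ Iic 0 ∧ ∀ m : Fin M, ω m.succ ∈ univ} := by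
  have hεs : 0 ≤ (2 : ℝ) ^ Rs - 1 := by linarith [one_lt_two_rpow hRs]
  intro ω hω
  rcases le_or_gt ((2 ^ R0 - 1) * 2 ^ Rs / P) (ω 0) with hg | hg
  · refine Or.inl (Or.inl ⟨hg, fun m => (le_div_iff₀' hP).2 ?_⟩)
    exact (mul_lt_of_rateHSIC_lt_of_le_tau (two_rpow_sub_one_le_tau hR0 hP hg) (hω m)).le
  rcases le_or_gt 0 (ω 0) with hg0 | hg0
  · refine Or.inl (Or.inr ⟨hg.le, fun m => (le_div_iff₀' hP).2 ?_⟩)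
    have := mul_lt_of_rateHSIC_lt hRs.le (mul_nonneg hP.le hg0) (hω m)
    rw [lt_div_iff₀' hP] at hg
    nlinarith
  · exact Or.inr ⟨hg0.le, fun _ => mem_univ _⟩

lemma outageHSIC_le (hR0 : 0 < R0) (hRs : 0 < Rs) (hP : 1 ≤ P) :
    outageHSIC M R0 Rs P ≤ ((2 ^ Rs - 1) ^ M + (2 ^ R0 - 1) * 2 ^ Rs *
      ((2 ^ Rs - 1) * ((2 ^ R0 - 1) * 2 ^ Rs + 1)) ^ M) / P ^ M := by
  have hcover := setOf_rateHSIC_lt_subset (M := M) hR0 hRs (by linarith)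
  set εs : ℝ := 2 ^ Rs - 1
  set c : ℝ := (2 ^ R0 - 1) * 2 ^ Rs
  have hεs : 0 ≤ εs := by linarith [one_lt_two_rpow hRs]
  have hc : 0 ≤ c := mul_nonneg (by linarith [one_lt_two_rpow hR0]) (by positivity)
  have hIic (x : ℝ) (hx : 0 ≤ x) : (expMeasure 1).real (Iic x) ≤ x := by
    simpa using expMeasure_real_Iic_le one_pos hx
  have := isProbabilityMeasure_expMeasure (r := 1) one_pos
  calc outageHSIC M R0 Rs P
      ≤ (Measure.pi fun _ : Fin (M + 1) => expMeasure 1).real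
          ({ω | ω 0 ∈ Ici (c / P) ∧ ∀ m : Fin M, ω m.succ ∈ Iic (εs / P)} ∪
          {ω | ω 0 ∈ Iic (c / P) ∧ ∀ m : Fin M, ω m.succ ∈ Iic (εs * (c + 1) / P)} ∪
          {ω | ω 0 ∈ Iic 0 ∧ ∀ m : Fin M, ω m.succ ∈ univ}) :=
        (outageHSIC_eq hRs).trans_le (measureReal_mono hcover)
    _ ≤ 1 * (εs / P) ^ M + c / P * (εs * (c + 1) / P) ^ M + 0 * 1 ^ M := by
        refine (measureReal_union_le _ _).trans (add_le_add
          ((measureReal_union_le _ _).trans (add_le_add ?_ ?_)) ?_) <;>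
          rw [measureReal_pi_fin_cons] <;> gcongr
        exacts [measureReal_le_one, hIic _ (by positivity), hIic _ (by positivity),
          hIic _ (by positivity), hIic _ le_rfl, measureReal_le_one]
    _ = (εs ^ M + c / P * (εs * (c + 1)) ^ M) / P ^ M := by
        rw [div_pow, div_pow]; ring
    _ ≤ (εs ^ M + c * (εs * (c + 1)) ^ M) / P ^ M := by gcongr; exact div_le_self hc hP

end Outage

theorem hsic_pa_diversity_gain_general
    (M : ℕ) (R0 Rs : ℝ) (hR0 : 0 < R0) (hRs : 0 < Rs) :
    (∀ P > (0 : ℝ), 0 < outageHSIC M R0 Rs P) ∧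
    Tendsto (fun P : ℝ => Real.log (outageHSIC M R0 Rs P) / Real.log P)
      atTop (nhds (-(M : ℝ))) := by
  have hεs : 0 < (2 : ℝ) ^ Rs - 1 := by linarith [one_lt_two_rpow hRs]
  refine ⟨fun P hP => outageHSIC_pos hR0 hRs hP, ?_⟩
  apply tendsto_log_div_log_of_le_of_le (by positivity :
    0 < exp (-((2 ^ R0 - 1) * 2 ^ Rs)) * ((2 ^ Rs - 1) * exp (-(2 ^ Rs - 1))) ^ M)
  · filter_upwards [eventually_ge_atTop 1] with P hP
    rw [rpow_natCast]
    exact outageHSIC_ge_div_pow hR0 hRs hP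
  · filter_upwards [eventually_ge_atTop 1] with P hP
    rw [rpow_natCast]
    exact outageHSIC_le hR0 hRs hP

/-- Remark 2: the diversity gain of the HSIC-PA scheme is `M`:
the outage probability is positive for every `P > 0` and
`log Pout(P) / log P → −M` as `P → ∞`. -/
theorem hsic_pa_diversity_gain
    (M : ℕ) (hM : 1 ≤ M) (R0 Rs : ℝ) (hR0 : 0 < R0) (hRs : 0 < Rs) :
    (∀ P > (0 : ℝ), 0 < outageHSIC M R0 Rs P) ∧
    Tendsto (fun P : ℝ => Real.log (outageHSIC M R0 Rs P) / Real.log P)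
      atTop (nhds (-(M : ℝ))) :=
  hsic_pa_diversity_gain_general M R0 Rs hR0 hRs
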